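/- arXiv:2410.20579 — 2 statements merged into one kernel-verified Lean document; each statement's English description precedes it below -/
import Mathlib

section
/- Counterexample to C-index preservation under vertical recalibration: there exist two continuous strictly decreasing survival curves S_A, S_B : ℝ≥0 → [0,1] and a continuous strictly increasing bijection g : [0,1] → [0,1] with g(ρ*) = 1/2 for some ρ* ≠ 1/2, such that S_A⁻¹(1/2) < S_B⁻¹(1/2) but (g⁻¹∘S_A)⁻¹(1/2) > (g⁻¹∘S_B)⁻¹(1/2); i.e., the order of median survival times is reversed after recalibration. -/
open Set

private lemma exp_set_eq (c : ℝ) (hc0 : 0 < c) (hc1 : c ≤ 1) :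
    {t : ℝ | 0 ≤ t ∧ Real.exp (-t) ≤ c} = Ici (-Real.log c) := by
  ext t
  simp only [mem_setOf_eq, mem_Ici]
  constructor
  · rintro ⟨-, h⟩
    have := (Real.le_log_iff_exp_le hc0).mpr h
    linarith
  · intro h
    have hlc : Real.log c ≤ 0 := Real.log_nonpos hc0.le hc1
    refine ⟨by linarith, (Real.le_log_iff_exp_le hc0).mp (by linarith)⟩

private lemma exp_sq_set_eq (c : ℝ) (hc0 : 0 < c) (hc1 : c ≤ 1) :
    {t : ℝ | 0 ≤ t ∧ Real.exp (-(t ^ 2)) ≤ c} = Ici (Real.sqrt (-Real.log c)) := by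
  have hL : 0 ≤ -Real.log c := by
    have := Real.log_nonpos hc0.le hc1; linarith
  ext t
  simp only [mem_setOf_eq, mem_Ici]
  constructor
  · rintro ⟨ht, h⟩
    have h2 : -Real.log c ≤ t ^ 2 := by
      have := (Real.le_log_iff_exp_le hc0).mpr h
      linarith
    calc Real.sqrt (-Real.log c) ≤ Real.sqrt (t ^ 2) := Real.sqrt_le_sqrt h2
      _ = t := Real.sqrt_sq ht
  · intro h
    have ht : 0 ≤ t := le_trans (Real.sqrt_nonneg _) h
    refine ⟨ht, (Real.le_log_iff_exp_le hc0).mp ?_⟩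
    have h2 : -Real.log c ≤ t ^ 2 := by
      have := Real.sq_sqrt hL
      nlinarith [Real.sqrt_nonneg (-Real.log c)]
    linarith

/-- Counterexample to Harrell C-index preservation under vertical recalibration:
there are two continuous strictly decreasing survival curves `S_A`, `S_B` on
`[0,∞)` with values in `[0,1]` and a continuous strictly increasing bijection
`g` of `[0,1]` (with inverse `ginv`) sending some `ρ* ≠ 1/2` to `1/2`, such that
the median of `S_A` precedes that of `S_B`, but the order of the medians of the
recalibrated curves `g⁻¹ ∘ S_A`, `g⁻¹ ∘ S_B` is reversed (medians computed via
the generalized inverse `S⁻¹(ρ) = inf {t ≥ 0 : S t ≤ ρ}`). -/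
theorem cindex_not_preserved_counterexample :
    ∃ (SA SB g ginv : ℝ → ℝ),
      StrictAntiOn SA (Ici 0) ∧ StrictAntiOn SB (Ici 0) ∧
      Continuous SA ∧ Continuous SB ∧
      (∀ t ∈ Ici (0 : ℝ), SA t ∈ Icc (0 : ℝ) 1) ∧
      (∀ t ∈ Ici (0 : ℝ), SB t ∈ Icc (0 : ℝ) 1) ∧
      StrictMonoOn g (Icc 0 1) ∧ ContinuousOn g (Icc 0 1) ∧
      BijOn g (Icc 0 1) (Icc 0 1) ∧ InvOn ginv g (Icc 0 1) (Icc 0 1) ∧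
      (∃ ρstar ∈ Icc (0 : ℝ) 1, ρstar ≠ 1 / 2 ∧ g ρstar = 1 / 2) ∧
      sInf {t | 0 ≤ t ∧ SA t ≤ 1 / 2} < sInf {t | 0 ≤ t ∧ SB t ≤ 1 / 2} ∧
      sInf {t | 0 ≤ t ∧ ginv (SA t) ≤ 1 / 2}
        > sInf {t | 0 ≤ t ∧ ginv (SB t) ≤ 1 / 2} := by
  refine ⟨fun t => Real.exp (-t), fun t => Real.exp (-(t ^ 2)),
    fun x => if x ≤ 1 / 2 then x / 2 else (3 * x - 1) / 2,
    fun y => if y ≤ 1 / 4 then 2 * y else (2 * y + 1) / 3,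
    ?_, ?_, ?_, ?_, ?_, ?_, ?_, ?_, ?_, ?_, ?_, ?_, ?_⟩
  · -- StrictAntiOn SA
    intro a _ b _ hab
    exact Real.exp_lt_exp.mpr (by linarith)
  · -- StrictAntiOn SB
    intro a ha b hb hab
    simp only [mem_Ici] at ha hb
    exact Real.exp_lt_exp.mpr (by nlinarith)
  · continuity
  · continuity
  · -- range SA
    intro t ht
    simp only [mem_Ici] at ht
    exact ⟨(Real.exp_pos _).le, Real.exp_le_one_iff.mpr (by linarith)⟩
  · -- range SB
    intro t ht
    simp only [mem_Ici] at ht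
    exact ⟨(Real.exp_pos _).le, Real.exp_le_one_iff.mpr (by nlinarith)⟩
  · -- StrictMonoOn g
    intro a _ b _ hab
    dsimp only
    split_ifs <;> linarith
  · -- ContinuousOn g
    exact (Continuous.if_le (by continuity) (by continuity) continuous_id
      continuous_const (fun x hx => by simp only [id_eq] at hx; rw [hx]; norm_num)).continuousOn
  · -- BijOn g
    refine ⟨?_, ?_, ?_⟩
    · intro x hx
      obtain ⟨hx0, hx1⟩ := hx
      dsimp only
      split_ifs with h <;> exact ⟨by linarith, by linarith⟩
    · intro a _ b _ hab
      dsimp only at hab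
      by_contra hne
      rcases lt_or_gt_of_ne hne with h | h <;> (split_ifs at hab <;> linarith)
    · intro y hy
      obtain ⟨hy0, hy1⟩ := hy
      by_cases h : y ≤ 1 / 4
      · exact ⟨2 * y, ⟨by linarith, by linarith⟩, by simp only; rw [if_pos (by linarith)]; ring⟩
      · exact ⟨(2 * y + 1) / 3, ⟨by linarith, by linarith⟩,
          by simp only; rw [if_neg (by push_neg; linarith)]; ring⟩
  · -- InvOn
    constructor
    · intro x hx
      obtain ⟨hx0, hx1⟩ := hx
      dsimp only
      split_ifs with h1 h2 h2 <;> linarith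
    · intro y hy
      obtain ⟨hy0, hy1⟩ := hy
      dsimp only
      split_ifs with h1 h2 h2 <;> linarith
  · -- ρstar
    exact ⟨2 / 3, ⟨by norm_num, by norm_num⟩, by norm_num, by norm_num⟩
  · -- medians before recalibration
    rw [exp_set_eq (1 / 2) (by norm_num) (by norm_num),
      exp_sq_set_eq (1 / 2) (by norm_num) (by norm_num), csInf_Ici, csInf_Ici]
    have hlog : Real.log (1 / 2) = -Real.log 2 := by
      rw [one_div, Real.log_inv]
    rw [hlog, neg_neg]
    have h0 : (0.6931471803 : ℝ) < Real.log 2 := Real.log_two_gt_d9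
    have h1 : Real.log 2 < 0.6931471808 := Real.log_two_lt_d9
    have hs := Real.sq_sqrt (show (0:ℝ) ≤ Real.log 2 by linarith)
    have hsn := Real.sqrt_nonneg (Real.log 2)
    nlinarith [hs, hsn]
  · -- medians after recalibration
    have hset : ∀ S : ℝ → ℝ, (∀ t, 0 < S t) →
        {t : ℝ | 0 ≤ t ∧ (if S t ≤ 1 / 4 then 2 * S t else (2 * S t + 1) / 3) ≤ 1 / 2}
          = {t : ℝ | 0 ≤ t ∧ S t ≤ 1 / 4} := by
      intro S hS
      ext t
      simp only [mem_setOf_eq, and_congr_right_iff]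
      intro _
      split_ifs with h
      · constructor <;> intro <;> linarith
      · constructor <;> intro <;> linarith
    rw [hset _ (fun t => Real.exp_pos _), hset _ (fun t => Real.exp_pos _),
      exp_set_eq (1 / 4) (by norm_num) (by norm_num),
      exp_sq_set_eq (1 / 4) (by norm_num) (by norm_num), csInf_Ici, csInf_Ici]
    have hlog : Real.log (1 / 4) = -(2 * Real.log 2) := by
      rw [one_div, Real.log_inv, show (4:ℝ) = 2 ^ 2 by norm_num, Real.log_pow]
      push_cast; ring
    rw [hlog, neg_neg]
    have h0 : (0.6931471803 : ℝ) < Real.log 2 := Real.log_two_gt_d9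
    have hs := Real.sq_sqrt (show (0:ℝ) ≤ 2 * Real.log 2 by linarith)
    have hsn := Real.sqrt_nonneg (2 * Real.log 2)
    nlinarith [hs, hsn]
end

section
/- If X₁, ..., X_{n+1} are exchangeable and almost surely pairwise distinct, then the rank of X_{n+1} among X₁, ..., X_{n+1} is uniformly distributed on {1, 2, ..., n+1}. -/
/-!
By exchangeability, swapping coordinates `j` and `k` shows that the events
"coordinate `j` has exactly `m` coordinates below it" all have the same probability. When the
coordinates are pairwise distinct, the ranks form a bijection onto `{0, …, N - 1}`, so for fixed
`m` these `N` events partition the sample space up to a null set. Each therefore has probability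
`1 / N`.
-/

open MeasureTheory Finset Function

section Rank

variable {ι α : Type*} [Fintype ι] [LinearOrder α]

/-- Zero-based rank: `1 + rankCount j y` is the rank of `y j` among the values of `y`. -/
def rankCount (j : ι) (y : ι → α) : ℕ := #{i | y i < y j}

lemma rankCount_comp_perm (σ : Equiv.Perm ι) (j : ι) (y : ι → α) :
    rankCount j (y ∘ σ) = rankCount (σ j) y :=
  card_equiv σ (by simp)

lemma rankCount_lt_rankCount {y : ι → α} {j k : ι} (h : y j < y k) :
    rankCount j y < rankCount k y := by
  refine card_lt_card ⟨fun i hi => ?_, fun hsub => ?_⟩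
  · simp only [mem_filter, mem_univ, true_and] at hi ⊢
    exact hi.trans h
  · simpa using hsub (show j ∈ ({i | y i < y k} : Finset ι) by simpa using h)

lemma rankCount_injective {y : ι → α} (hy : Injective y) : Injective (rankCount · y) := by
  intro j k hjk
  by_contra hne
  rcases (hy.ne hne).lt_or_gt with hlt | hlt
  · exact (rankCount_lt_rankCount hlt).ne hjk
  · exact (rankCount_lt_rankCount hlt).ne' hjk

lemma rankCount_lt_card (j : ι) (y : ι → α) : rankCount j y < Fintype.card ι :=
  card_lt_univ_of_notMem (x := j) (by simp)

lemma exists_rankCount_eq {y : ι → α} (hy : Injective y) {m : ℕ} (hm : m < Fintype.card ι) :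
    ∃ j, rankCount j y = m := by
  let r : ι → Fin (Fintype.card ι) := fun j => ⟨rankCount j y, rankCount_lt_card j y⟩
  have hr : Bijective r := (Fintype.bijective_iff_injective_and_card r).2
    ⟨fun j k h => rankCount_injective hy (congrArg Fin.val h), (Fintype.card_fin _).symm⟩
  obtain ⟨j, hj⟩ := hr.2 ⟨m, hm⟩
  exact ⟨j, congrArg Fin.val hj⟩

lemma measurable_rankCount [MeasurableSpace α] [TopologicalSpace α] [OrderClosedTopology α]
    [SecondCountableTopology α] [OpensMeasurableSpace α] (j : ι) :
    Measurable (rankCount (α := α) j) := by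
  have : rankCount j = fun y : ι → α => ∑ i, if y i < y j then 1 else 0 :=
    funext fun y => card_filter _ _
  rw [this]
  exact Finset.measurable_sum _ fun i _ => Measurable.ite
    (measurableSet_lt (measurable_pi_apply i) (measurable_pi_apply j)) measurable_const
    measurable_const

lemma rankCount_last {n : ℕ} (y : Fin (n + 1) → α) :
    rankCount (Fin.last n) y = #{i : Fin n | y i.castSucc < y (Fin.last n)} := by
  rw [rankCount, card_filter, card_filter, Fin.sum_univ_castSucc]
  simp

end Rank

section Exchangeable

variable {Ω ι α : Type*} [MeasurableSpace Ω] {μ : Measure Ω} [Fintype ι] [LinearOrder α]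
  [MeasurableSpace α] [TopologicalSpace α] [OrderClosedTopology α] [SecondCountableTopology α]
  [OpensMeasurableSpace α] {Z : Ω → ι → α}

lemma measure_rankCount_eq_of_exchangeable (hZ : Measurable Z)
    (hexch : ∀ σ : Equiv.Perm ι, μ.map (fun ω i => Z ω (σ i)) = μ.map Z)
    (j k : ι) (m : ℕ) :
    μ {ω | rankCount j (Z ω) = m} = μ {ω | rankCount k (Z ω) = m} := by
  classical
  have hS : MeasurableSet {y : ι → α | rankCount j y = m} :=
    measurable_rankCount j (measurableSet_singleton m)
  have hZσ : Measurable fun ω i => Z ω (Equiv.swap j k i) := by fun_prop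
  calc μ {ω | rankCount j (Z ω) = m} = μ.map Z {y | rankCount j y = m} :=
        (Measure.map_apply hZ hS).symm
    _ = μ.map (fun ω i => Z ω (Equiv.swap j k i)) {y | rankCount j y = m} := by rw [hexch]
    _ = μ {ω | rankCount k (Z ω) = m} := by
        rw [Measure.map_apply hZσ hS]
        refine congrArg μ (Set.ext fun ω => ?_)
        change rankCount j (Z ω ∘ Equiv.swap j k) = m ↔ rankCount k (Z ω) = m
        rw [rankCount_comp_perm, Equiv.swap_apply_left]

lemma sum_measure_rankCount_eq_one [IsProbabilityMeasure μ] (hZ : Measurable Z)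
    (hinj : ∀ᵐ ω ∂μ, Injective (Z ω)) {m : ℕ} (hm : m < Fintype.card ι) :
    ∑ j, μ {ω | rankCount j (Z ω) = m} = 1 := by
  have hnull : μ {ω | ¬Injective (Z ω)} = 0 := ae_iff.mp hinj
  have hdisj : Pairwise (AEDisjoint μ on fun j => {ω | rankCount j (Z ω) = m}) := by
    refine fun j k hjk => measure_mono_null ?_ hnull
    rintro ω ⟨hj, hk⟩ hω
    exact hjk (rankCount_injective hω (hj.trans hk.symm))
  have hcover : (⋃ j, {ω | rankCount j (Z ω) = m}) =ᵐ[μ] Set.univ := by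
    refine ae_eq_univ.2 (measure_mono_null ?_ hnull)
    intro ω hω hinjω
    exact hω (by simpa using exists_rankCount_eq hinjω hm)
  have hmeas (j : ι) : NullMeasurableSet {ω | rankCount j (Z ω) = m} μ :=
    ((measurable_rankCount j).comp hZ (measurableSet_singleton m)).nullMeasurableSet
  simpa [measure_congr hcover] using (measure_biUnion_finset₀ (s := univ)
    (fun j _ k _ hjk => hdisj hjk) fun j _ => hmeas j).symm

theorem measure_rankCount_eq_inv_card [IsProbabilityMeasure μ] (hZ : Measurable Z)
    (hexch : ∀ σ : Equiv.Perm ι, μ.map (fun ω i => Z ω (σ i)) = μ.map Z)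
    (hinj : ∀ᵐ ω ∂μ, Injective (Z ω)) (j : ι) {m : ℕ} (hm : m < Fintype.card ι) :
    μ {ω | rankCount j (Z ω) = m} = (Fintype.card ι : ENNReal)⁻¹ := by
  refine ENNReal.eq_inv_of_mul_eq_one_left ?_
  rw [mul_comm, ← nsmul_eq_mul, ← card_univ, ← sum_const,
    ← sum_measure_rankCount_eq_one hZ hinj hm]
  exact sum_congr rfl fun k _ => measure_rankCount_eq_of_exchangeable hZ hexch j k m

end Exchangeable

/-- If `X₁, …, X_{n+1}` are exchangeable and a.s. pairwise distinct, then the rank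
of `X_{n+1}` among `X₁, …, X_{n+1}` (i.e. `1 + #{i ≤ n : X_i < X_{n+1}}`) is
uniformly distributed on `{1, …, n+1}`. -/
theorem rank_uniform_of_exchangeable
    {Ω : Type*} [MeasurableSpace Ω] (μ : Measure Ω) [IsProbabilityMeasure μ]
    (n : ℕ)
    (X : Fin (n + 1) → Ω → ℝ) (hmeas : ∀ i, Measurable (X i))
    (hexch : ∀ σ : Equiv.Perm (Fin (n + 1)),
      μ.map (fun ω => fun i => X (σ i) ω) = μ.map (fun ω => fun i => X i ω))
    (hdistinct : ∀ᵐ ω ∂μ, Function.Injective fun i => X i ω) :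
    ∀ k ∈ Finset.Icc 1 (n + 1),
      μ {ω | 1 + (Finset.univ.filter
            (fun i : Fin n => X i.castSucc ω < X (Fin.last n) ω)).card = k}
        = (↑(n + 1) : ENNReal)⁻¹ := by
  intro k hk
  obtain ⟨hk1, hkn⟩ := mem_Icc.mp hk
  have hset : {ω | 1 + (Finset.univ.filter
      (fun i : Fin n => X i.castSucc ω < X (Fin.last n) ω)).card = k}
      = {ω | rankCount (Fin.last n) (fun i => X i ω) = k - 1} := by
    ext ω
    simp only [Set.mem_ofPred_eq, rankCount_last]
    omega
  have hrank : k - 1 < Fintype.card (Fin (n + 1)) := by rw [Fintype.card_fin]; omega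
  rw [hset, measure_rankCount_eq_inv_card (measurable_pi_lambda _ hmeas) hexch hdistinct _ hrank,
    Fintype.card_fin]
end
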